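/- arXiv:2402.11069 — 2 statements merged into one kernel-verified Lean document; each statement's English description precedes it below -/
import Mathlib

section
/- The torsion of a Courant algebroid connection, defined by T_D(u,v) = D_u v − D_v u − [u,v] + ⟨Du, v⟩, is C∞(M)-multilinear in both arguments and, when all indices are lowered with the pairing, completely antisymmetric, i.e., T_D ∈ Γ(Λ³E*). -/
/-- Algebraic model of a Courant algebroid: the commutative ring `R` plays the
role of the smooth functions `C^∞(M)`, `E` plays the role of the module of
sections `Γ(E)`, and vector fields on `M` are modelled as `Derivation ℝ R R`.
The four axioms of Definition 2.1 are `jacobi`, `leibniz`, `invariance`,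
`symmetrized`; `Dop` is the operator `𝒟 = ρ^T ∘ d`, characterized by
`⟨𝒟 f, w⟩ = ρ(w) f`. -/
structure CourantAlgebroid (R : Type) [CommRing R] [Algebra ℝ R]
    (E : Type) [AddCommGroup E] [Module R E] : Type where
  bracket : E → E → E
  ip : E →ₗ[R] E →ₗ[R] R
  rho : E →ₗ[R] Derivation ℝ R R
  Dop : R → E
  ip_symm : ∀ u v, ip u v = ip v u
  ip_nondeg : ∀ u, (∀ v, ip u v = 0) → u = 0
  ip_Dop : ∀ f w, ip (Dop f) w = rho w f
  bracket_add_left : ∀ u v w, bracket (u + v) w = bracket u w + bracket v w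
  bracket_add_right : ∀ u v w, bracket u (v + w) = bracket u v + bracket u w
  jacobi : ∀ u v w, bracket u (bracket v w) = bracket (bracket u v) w + bracket v (bracket u w)
  leibniz : ∀ u (f : R) v, bracket u (f • v) = f • bracket u v + rho u f • v
  invariance : ∀ u v w, rho u (ip v w) = ip (bracket u v) w + ip v (bracket u w)
  symmetrized : ∀ u v, bracket u v + bracket v u = Dop (ip u v)

/-- A Courant algebroid connection on `E`: `C^∞`-linear in the direction,
a derivation in the second slot, and compatible with the pairing. -/
structure CAConnection (R : Type) [CommRing R] [Algebra ℝ R]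
    (E : Type) [AddCommGroup E] [Module R E]
    (CA : CourantAlgebroid R E) : Type where
  D : E → E → E
  add_left : ∀ u v w, D (u + v) w = D u w + D v w
  smul_left : ∀ (f : R) u v, D (f • u) v = f • D u v
  add_right : ∀ u v w, D u (v + w) = D u v + D u w
  leibniz : ∀ u (f : R) v, D u (f • v) = f • D u v + CA.rho u f • v
  compat : ∀ u v w, CA.rho u (CA.ip v w) = CA.ip (D u v) w + CA.ip v (D u w)

/-- The torsion of a Courant algebroid connection, as a trilinear form:
`T_D(u,v,w) = ⟨D_u v − D_v u − [u,v], w⟩ + ⟨D_w u, v⟩`. -/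
def torsion {R : Type} [CommRing R] [Algebra ℝ R]
    {E : Type} [AddCommGroup E] [Module R E]
    {CA : CourantAlgebroid R E} (D : CAConnection R E CA) (u v w : E) : R :=
  CA.ip (D.D u v - D.D v u - CA.bracket u v) w + CA.ip (D.D w u) v

/-! The torsion is visibly `C^∞`-linear in its last slot. Both antisymmetries are pointwise
identities: in the first pair of slots they come from metric compatibility and the symmetrized
axiom `[u,v] + [v,u] = 𝒟⟨u,v⟩`, in the last pair from metric compatibility and invariance of
the pairing. Composing with the antisymmetries then carries linearity to the other two slots. -/

section Torsion

variable {R : Type} [CommRing R] [Algebra ℝ R] {E : Type} [AddCommGroup E] [Module R E]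
  {CA : CourantAlgebroid R E} (D : CAConnection R E CA)

lemma CourantAlgebroid.ip_bracket_add_ip_bracket_swap (u v w : E) :
    CA.ip (CA.bracket u v) w + CA.ip (CA.bracket v u) w = CA.rho w (CA.ip u v) := by
  rw [← LinearMap.add_apply, ← map_add, CA.symmetrized, CA.ip_Dop]

lemma torsion_eq (u v w : E) : torsion D u v w =
    CA.ip (D.D u v) w - CA.ip (D.D v u) w - CA.ip (CA.bracket u v) w + CA.ip (D.D w u) v := by
  simp only [torsion, map_sub, LinearMap.sub_apply]

lemma torsion_add_right (u v w w' : E) :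
    torsion D u v (w + w') = torsion D u v w + torsion D u v w' := by
  simp only [torsion_eq, D.add_left, map_add, LinearMap.add_apply]
  ring

lemma torsion_smul_right (f : R) (u v w : E) :
    torsion D u v (f • w) = f * torsion D u v w := by
  simp only [torsion_eq, D.smul_left, map_smul, LinearMap.smul_apply, smul_eq_mul]
  ring

lemma torsion_swap_left (u v w : E) : torsion D u v w = -torsion D v u w := by
  rw [torsion_eq, torsion_eq]
  linear_combination -D.compat w u v - CA.ip_symm u (D.D w v) -
    CA.ip_bracket_add_ip_bracket_swap u v w

lemma torsion_swap_right (u v w : E) : torsion D u v w = -torsion D u w v := by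
  rw [torsion_eq, torsion_eq]
  linear_combination -D.compat u v w - CA.ip_symm v (D.D u w) + CA.invariance u v w +
    CA.ip_symm v (CA.bracket u w)

lemma torsion_add_middle (u v v' w : E) :
    torsion D u (v + v') w = torsion D u v w + torsion D u v' w := by
  rw [torsion_swap_right, torsion_add_right, torsion_swap_right D u v, torsion_swap_right D u v']
  ring

lemma torsion_smul_middle (f : R) (u v w : E) :
    torsion D u (f • v) w = f * torsion D u v w := by
  rw [torsion_swap_right, torsion_smul_right, torsion_swap_right D u v]
  ring

lemma torsion_add_left (u u' v w : E) :
    torsion D (u + u') v w = torsion D u v w + torsion D u' v w := by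
  rw [torsion_swap_left, torsion_add_middle, torsion_swap_left D u, torsion_swap_left D u']
  ring

lemma torsion_smul_left (f : R) (u v w : E) :
    torsion D (f • u) v w = f * torsion D u v w := by
  rw [torsion_swap_left, torsion_smul_middle, torsion_swap_left D u]
  ring

end Torsion

/-- the torsion `T_D(u,v) = D_u v − D_v u − [u,v] + ⟨Du,v⟩` of a
Courant algebroid connection is `C^∞(M)`-multilinear (additive and
`C^∞`-homogeneous in every slot of the associated trilinear form) and, with
all indices lowered by the pairing, completely antisymmetric, i.e.
`T_D ∈ Γ(Λ³E^*)`. -/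
theorem torsion_tensorial_and_antisymmetric
    (R : Type) [CommRing R] [Algebra ℝ R]
    (E : Type) [AddCommGroup E] [Module R E]
    (CA : CourantAlgebroid R E) (D : CAConnection R E CA) :
    (∀ u u' v w, torsion D (u + u') v w = torsion D u v w + torsion D u' v w) ∧
    (∀ (f : R) u v w, torsion D (f • u) v w = f * torsion D u v w) ∧
    (∀ u v v' w, torsion D u (v + v') w = torsion D u v w + torsion D u v' w) ∧
    (∀ (f : R) u v w, torsion D u (f • v) w = f * torsion D u v w) ∧
    (∀ u v w w', torsion D u v (w + w') = torsion D u v w + torsion D u v w') ∧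
    (∀ (f : R) u v w, torsion D u v (f • w) = f * torsion D u v w) ∧
    (∀ u v w, torsion D u v w = - torsion D v u w) ∧
    (∀ u v w, torsion D u v w = - torsion D u w v) :=
  ⟨torsion_add_left D, torsion_smul_left D, torsion_add_middle D, torsion_smul_middle D,
    torsion_add_right D, torsion_smul_right D, torsion_swap_left D, torsion_swap_right D⟩
end

section
/- Changing the divergence changes the generalized Ricci tensor by a Lie derivative term: Rc(𝒢, div + ⟨e,·⟩) − Rc(𝒢, div) = −(1/2) ℒ_{𝒢e} 𝒢, for any generalized pseudometric 𝒢, divergence div, and section e. -/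
section Involution

variable {R E : Type*} [CommRing R] [AddCommGroup E] [Module R E] {G : E →ₗ[R] E}

theorem exists_eq_add_of_involutive [Invertible (2 : R)] (hGG : Function.Involutive G) (y : E) :
    ∃ a b, G a = a ∧ G b = -b ∧ y = a + b := by
  refine ⟨(⅟2 : R) • (y + G y), (⅟2 : R) • (y - G y), ?_, ?_, ?_⟩
  · rw [map_smul, map_add, hGG, add_comm]
  · rw [map_smul, map_sub, hGG, ← smul_neg, neg_sub]
  · rw [← smul_add, add_add_sub_cancel, ← two_smul R, smul_smul, invOf_mul_self, one_smul]

theorem map_apply_eq_neg_of_eq_self {T : E → E} (hT : ∀ x, T (G x) = -G (T x))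
    (hGG : Function.Involutive G) {u : E} (hu : G u = u) : G (T u) = -T u := by
  have h := hT u
  rw [hu] at h
  conv_lhs => rw [h, map_neg, hGG]

theorem map_apply_eq_self_of_eq_neg {T : E → E} (hT : ∀ x, T (G x) = -G (T x))
    (hT_neg : ∀ x, T (-x) = -T x) {v : E} (hv : G v = -v) : G (T v) = T v := by
  have h := hT (-v)
  rw [map_neg, hv, neg_neg, hT_neg, map_neg, neg_neg] at h
  exact h.symm

end Involution

namespace LinearMap.IsSelfAdjoint

variable {R E : Type*} [CommRing R] [AddCommGroup E] [Module R E]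
  {B : LinearMap.BilinForm R E} {G : E →ₗ[R] E} {T₁ T₂ : E → E}

theorem apply_eq_zero_of_eq_self_of_eq_neg [Invertible (2 : R)] (hG : B.IsSelfAdjoint G)
    {u v : E} (hu : G u = u) (hv : G v = -v) : B u v = 0 := by
  have h : B u v = -B u v := by
    rw [← map_neg, ← hv, ← hG u v, hu]
  linear_combination (⅟2 : R) * h - B u v * invOf_mul_self (2 : R)

theorem apply_eq_zero_of_eq_neg_of_eq_self [Invertible (2 : R)] (hG : B.IsSelfAdjoint G)
    {u v : E} (hv : G v = -v) (hu : G u = u) : B v u = 0 := by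
  have h : B v u = -B v u := by
    rw [← LinearMap.neg_apply, ← map_neg, ← hv, hG v u, hu]
  linear_combination (⅟2 : R) * h - B v u * invOf_mul_self (2 : R)

theorem map_neg (hB : B.SeparatingLeft) {T : E → E} (hT : B.IsSelfAdjoint T) (x : E) :
    T (-x) = -T x := by
  rw [← sub_eq_zero, sub_neg_eq_add]
  refine hB _ fun y => ?_
  rw [map_add, LinearMap.add_apply, hT, hT, _root_.map_neg, LinearMap.neg_apply, neg_add_cancel]

theorem eq_of_eq_on_eigenvectors [Invertible (2 : R)] (hB : B.SeparatingLeft)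
    (hGG : Function.Involutive G) (h₁ : B.IsSelfAdjoint T₁) (h₂ : B.IsSelfAdjoint T₂)
    (hplus : ∀ u, G u = u → T₁ u = T₂ u) (hminus : ∀ v, G v = -v → T₁ v = T₂ v) :
    T₁ = T₂ := by
  funext x
  rw [← sub_eq_zero]
  refine hB _ fun y => ?_
  obtain ⟨a, b, ha, hb, rfl⟩ := exists_eq_add_of_involutive hGG y
  rw [map_sub, LinearMap.sub_apply, map_add, map_add, h₁, h₁, h₂, h₂, hplus a ha,
    hminus b hb, sub_self]

theorem eq_of_anticomm_of_mixed_eq [Invertible (2 : R)] (hB : B.SeparatingLeft) (hBs : B.IsSymm)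
    (hG : B.IsSelfAdjoint G) (hGG : Function.Involutive G)
    (h₁ : B.IsSelfAdjoint T₁) (h₂ : B.IsSelfAdjoint T₂)
    (ha₁ : ∀ x, T₁ (G x) = -G (T₁ x)) (ha₂ : ∀ x, T₂ (G x) = -G (T₂ x))
    (hmixed : ∀ u v, G u = u → G v = -v → B v (T₁ u) = B v (T₂ u)) : T₁ = T₂ := by
  have hplus (u : E) (hu : G u = u) : T₁ u = T₂ u := by
    rw [← sub_eq_zero]
    refine hB _ fun y => ?_
    obtain ⟨a, b, ha, hb, rfl⟩ := exists_eq_add_of_involutive hGG y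
    have hTa (T : E → E) (hT : ∀ x, T (G x) = -G (T x)) : B (T u) a = 0 :=
      hG.apply_eq_zero_of_eq_neg_of_eq_self (map_apply_eq_neg_of_eq_self hT hGG hu) ha
    rw [map_sub, LinearMap.sub_apply, map_add, map_add, hTa T₁ ha₁, hTa T₂ ha₂,
      hBs.eq (T₁ u), hBs.eq (T₂ u), hmixed u b hu hb, sub_self]
  have hminus (v : E) (hv : G v = -v) : T₁ v = T₂ v := by
    rw [← sub_eq_zero]
    refine hB _ fun y => ?_
    obtain ⟨a, b, ha, hb, rfl⟩ := exists_eq_add_of_involutive hGG y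
    have hTb (T : E → E) (hT : ∀ x, T (G x) = -G (T x)) (hs : B.IsSelfAdjoint T) :
        B (T v) b = 0 :=
      hG.apply_eq_zero_of_eq_self_of_eq_neg
        (map_apply_eq_self_of_eq_neg hT (hs.map_neg hB) hv) hb
    rw [map_sub, LinearMap.sub_apply, map_add, map_add, hTb T₁ ha₁ h₁, hTb T₂ ha₂ h₂,
      h₁, h₂, hplus a ha, sub_self]
  exact eq_of_eq_on_eigenvectors hB hGG h₁ h₂ hplus hminus

end LinearMap.IsSelfAdjoint

namespace CourantAlgebroid

variable {R E : Type} [CommRing R] [Algebra ℝ R] [AddCommGroup E] [Module R E]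
  (CA : CourantAlgebroid R E) {G : E →ₗ[R] E}

def lieDeriv (w : E) (G : E →ₗ[R] E) (x : E) : E :=
  CA.bracket w (G x) - G (CA.bracket w x)

theorem isSelfAdjoint_lieDeriv (hG : CA.ip.IsSelfAdjoint G) (w : E) :
    CA.ip.IsSelfAdjoint (CA.lieDeriv w G) := by
  intro a b
  have ha := CA.invariance w (G a) b
  have hb := CA.invariance w a (G b)
  rw [hG a b] at ha
  rw [lieDeriv, lieDeriv, map_sub, map_sub, LinearMap.sub_apply, hG (CA.bracket w a) b,
    ← hG a (CA.bracket w b)]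
  linear_combination hb - ha

theorem lieDeriv_map (hGG : Function.Involutive G) (w x : E) :
    CA.lieDeriv w G (G x) = -G (CA.lieDeriv w G x) := by
  rw [lieDeriv, lieDeriv, hGG x, map_sub, hGG, neg_sub]

theorem ip_lieDeriv_of_eq_self_of_eq_neg (hG : CA.ip.IsSelfAdjoint G) (w : E) {u v : E}
    (hu : G u = u) (hv : G v = -v) :
    CA.ip v (CA.lieDeriv w G u) = 2 * CA.ip v (CA.bracket w u) := by
  rw [lieDeriv, map_sub, hu, ← hG, hv, map_neg, LinearMap.neg_apply]
  ring

theorem ip_bracket_of_eq_self_of_eq_neg [Invertible (2 : R)] (hG : CA.ip.IsSelfAdjoint G)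
    (e : E) {u v : E} (hu : G u = u) (hv : G v = -v) :
    CA.ip v (CA.bracket (G e) u) =
      CA.rho v (CA.ip e u) + CA.rho u (CA.ip e v) - CA.ip e (G (CA.bracket v u)) := by
  have hvu : CA.ip v u = 0 := hG.apply_eq_zero_of_eq_neg_of_eq_self hv hu
  have hGe_v : CA.ip (G e) v = -CA.ip e v := by rw [hG, hv, map_neg]
  have hGe_u : CA.ip (G e) u = CA.ip e u := by rw [hG, hu]
  have h₁ := CA.invariance (G e) v u
  have h₂ := congrArg (CA.ip · u) (CA.symmetrized (G e) v)
  have h₃ := CA.invariance v (G e) u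
  simp only [map_add, LinearMap.add_apply, CA.ip_Dop, hGe_v, map_neg] at h₂
  rw [hvu, map_zero] at h₁
  rw [hGe_u, hG] at h₃
  linear_combination -h₁ - h₂ - h₃

end CourantAlgebroid

theorem ricci_change_of_divergence_general
    (R : Type) [CommRing R] [Algebra ℝ R]
    (E : Type) [AddCommGroup E] [Module R E] [Module ℝ E] [IsScalarTower ℝ R E]
    (CA : CourantAlgebroid R E)
    (G : E →ₗ[R] E)
    (hGsym : ∀ x y, CA.ip (G x) y = CA.ip x (G y))
    (hGsq : ∀ x, G (G x) = x)
    (dv : E → R)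
    (e : E)
    (TrTerm : E → E → R)     -- the trace term `Tr_{V₊}[[·,v₋]₋,u₊]₊`
    (Rc₁ Rc₂ : E → E)
    (hRc₁sym : ∀ x y, CA.ip (Rc₁ x) y = CA.ip x (Rc₁ y))
    (hRc₂sym : ∀ x y, CA.ip (Rc₂ x) y = CA.ip x (Rc₂ y))
    (hRc₁anti : ∀ x, Rc₁ (G x) = -(G (Rc₁ x)))
    (hRc₂anti : ∀ x, Rc₂ (G x) = -(G (Rc₂ x)))
    (hRc₁def : ∀ u v, G u = u → G v = -v →
      CA.ip v (Rc₁ u) = dv (G (CA.bracket v u)) - CA.rho v (dv u)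
        - CA.rho u (dv v) - 2 * TrTerm v u)
    (hRc₂def : ∀ u v, G u = u → G v = -v →
      CA.ip v (Rc₂ u) =
        (dv (G (CA.bracket v u)) + CA.ip e (G (CA.bracket v u)))
        - CA.rho v (dv u + CA.ip e u) - CA.rho u (dv v + CA.ip e v)
        - 2 * TrTerm v u) :
    ∀ x, Rc₂ x - Rc₁ x =
      -((1/2 : ℝ) • (CA.bracket (G e) (G x) - G (CA.bracket (G e) x))) := by
  let : Invertible (2 : R) :=
    { invOf := algebraMap ℝ R (1 / 2)
      invOf_mul_self := by rw [← map_ofNat (algebraMap ℝ R) 2, ← map_mul]; norm_num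
      mul_invOf_self := by rw [← map_ofNat (algebraMap ℝ R) 2, ← map_mul]; norm_num }
  have hdiff : (fun x => Rc₂ x - Rc₁ x) = (-⅟2 : R) • CA.lieDeriv (G e) G := by
    refine LinearMap.IsSelfAdjoint.eq_of_anticomm_of_mixed_eq (B := CA.ip) CA.ip_nondeg
      ⟨CA.ip_symm⟩ hGsym hGsq (LinearMap.IsAdjointPair.sub hRc₂sym hRc₁sym)
      ((CA.isSelfAdjoint_lieDeriv hGsym _).smul _) (fun x => ?_) (fun x => ?_)
      fun u v hu hv => ?_
    · rw [hRc₂anti, hRc₁anti, map_sub, neg_sub_neg, neg_sub]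
    · rw [Pi.smul_apply, Pi.smul_apply, CA.lieDeriv_map hGsq, map_smul, smul_neg]
    · rw [Pi.smul_apply, map_sub, map_smul, smul_eq_mul, hRc₂def u v hu hv, hRc₁def u v hu hv,
        CA.ip_lieDeriv_of_eq_self_of_eq_neg hGsym _ hu hv,
        CA.ip_bracket_of_eq_self_of_eq_neg hGsym e hu hv, map_add, map_add]
      linear_combination (CA.rho v (CA.ip e u) + CA.rho u (CA.ip e v)
        - CA.ip e (G (CA.bracket v u))) * invOf_mul_self (2 : R)
  intro x
  rw [congrFun hdiff x, ← algebraMap_smul R (1 / 2 : ℝ), Pi.smul_apply, neg_smul]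
  rfl

/-- Proposition 4.10: changing the divergence changes the
generalized Ricci tensor by a Lie derivative term:
`Rc(G, div + ⟨e,·⟩) − Rc(G, div) = −½ ℒ_{Ge} G`.
The Ricci tensor `Rc(G, div)` is encoded as the endomorphism which is
symmetric, anticommutes with `G` (only mixed components), and whose mixed
components are given by Proposition 4.7:
`⟨v₋, Rc(u₊)⟩ = div(G[v₋,u₊]) − ρ(v₋)div(u₊) − ρ(u₊)div(v₋) − 2 Tr_{V₊}[[·,v₋]₋,u₊]₊`,
the trace term being the same for both divergences.  The generalized Lie
derivative is `(ℒ_w G)x = [w, Gx] − G[w, x]`. -/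
theorem ricci_change_of_divergence
    (R : Type) [CommRing R] [Algebra ℝ R]
    (E : Type) [AddCommGroup E] [Module R E] [Module ℝ E] [IsScalarTower ℝ R E]
    (CA : CourantAlgebroid R E)
    (G : E →ₗ[R] E)
    (hGsym : ∀ x y, CA.ip (G x) y = CA.ip x (G y))
    (hGsq : ∀ x, G (G x) = x)
    (dv : E → R)
    (hdv_add : ∀ u v, dv (u + v) = dv u + dv v)
    (hdv_leibniz : ∀ (g : R) u, dv (g • u) = g * dv u + CA.rho u g)
    (e : E)
    (TrTerm : E → E → R)     -- the trace term `Tr_{V₊}[[·,v₋]₋,u₊]₊`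
    (Rc₁ Rc₂ : E → E)
    (hRc₁sym : ∀ x y, CA.ip (Rc₁ x) y = CA.ip x (Rc₁ y))
    (hRc₂sym : ∀ x y, CA.ip (Rc₂ x) y = CA.ip x (Rc₂ y))
    (hRc₁anti : ∀ x, Rc₁ (G x) = -(G (Rc₁ x)))
    (hRc₂anti : ∀ x, Rc₂ (G x) = -(G (Rc₂ x)))
    (hRc₁def : ∀ u v, G u = u → G v = -v →
      CA.ip v (Rc₁ u) = dv (G (CA.bracket v u)) - CA.rho v (dv u)
        - CA.rho u (dv v) - 2 * TrTerm v u)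
    (hRc₂def : ∀ u v, G u = u → G v = -v →
      CA.ip v (Rc₂ u) =
        (dv (G (CA.bracket v u)) + CA.ip e (G (CA.bracket v u)))
        - CA.rho v (dv u + CA.ip e u) - CA.rho u (dv v + CA.ip e v)
        - 2 * TrTerm v u) :
    ∀ x, Rc₂ x - Rc₁ x =
      -((1/2 : ℝ) • (CA.bracket (G e) (G x) - G (CA.bracket (G e) x))) :=
  ricci_change_of_divergence_general R E CA G hGsym hGsq dv e TrTerm Rc₁ Rc₂ hRc₁sym hRc₂sym
    hRc₁anti hRc₂anti hRc₁def hRc₂def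
end
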